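/- Let f : ℝⁿ × ℝᵐ → ℝⁿ, φ : ℝⁿ × ℝᵐ → ℝᵏ, and L : ℝⁿ × ℝᵐ → ℝ be continuously differentiable, and let t_f > 0. Let (q,u,p,λ) : [0,t_f] → ℝⁿ × ℝᵐ × ℝⁿ × ℝᵏ be a continuously differentiable solution of the augmented adjoint DAE system: q̇ = f(q,u), ṗ = −D_qf(q,u)ᵀ p − D_qφ(q,u)ᵀ λ − ∇_qL(q,u), 0 = φ(q,u), 0 = D_uf(q,u)ᵀ p + D_uφ(q,u)ᵀ λ + ∇_uL(q,u), satisfying the terminal condition p(t_f) = 0, and let (δq, δu) : [0,t_f] → ℝⁿ × ℝᵐ be a continuously differentiable solution of the variational equations δq̇ = D_qf(q,u) δq + D_uf(q,u) δu and 0 = D_qφ(q,u) δq + D_uφ(q,u) δu along (q,u). Then ⟨p(0), δq(0)⟩ = ∫₀^{t_f} ( ⟨∇_qL(q(t),u(t)), δq(t)⟩ + ⟨∇_uL(q(t),u(t)), δu(t)⟩ ) dt, i.e., p(0) is the adjoint sensitivity of the running cost ∫₀^{t_f} L(q,u) dt with respect to a perturbation δq(0) of the initial condition. -/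

import Mathlib

/-!
Along the two systems, `t ↦ ⟪p t, δq t⟫` has derivative `-(⟪∇_qL, δq⟫ + ⟪∇_uL, δu⟫)`: the
`D_qf` terms cancel by adjointness, and the two algebraic equations (the adjoint one paired with
`δu`, the linearised constraint paired with `λ`) trade the `D_uf`, `D_qφ` and `D_uφ` terms for `∇_uL`.
Integrating over `[0, t_f]` and using `p(t_f) = 0` gives the claim.
-/

open scoped RealInnerProductSpace

noncomputable section

abbrev Euc (n : ℕ) : Type := EuclideanSpace ℝ (Fin n)

/-- Partial Jacobian `D_qF(q,u)` with respect to the first argument. -/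
noncomputable def Dq {n m k : ℕ} (F : Euc n × Euc m → Euc k) (q : Euc n) (u : Euc m) :
    Euc n →L[ℝ] Euc k :=
  fderiv ℝ (fun q' => F (q', u)) q

/-- Partial Jacobian `D_uF(q,u)` with respect to the second argument. -/
noncomputable def Du {n m k : ℕ} (F : Euc n × Euc m → Euc k) (q : Euc n) (u : Euc m) :
    Euc m →L[ℝ] Euc k :=
  fderiv ℝ (fun u' => F (q, u')) u

/-- `D_qF(q,u)ᵀ`, the transpose (adjoint) of the partial Jacobian in `q`. -/
noncomputable def DqT {n m k : ℕ} (F : Euc n × Euc m → Euc k) (q : Euc n) (u : Euc m) :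
    Euc k →L[ℝ] Euc n :=
  ContinuousLinearMap.adjoint (Dq F q u)

/-- `D_uF(q,u)ᵀ`, the transpose (adjoint) of the partial Jacobian in `u`. -/
noncomputable def DuT {n m k : ℕ} (F : Euc n × Euc m → Euc k) (q : Euc n) (u : Euc m) :
    Euc k →L[ℝ] Euc m :=
  ContinuousLinearMap.adjoint (Du F q u)

/-- Partial gradient `∇_qL(q,u)`. -/
noncomputable def gradQ {n m : ℕ} (L : Euc n × Euc m → ℝ) (q : Euc n) (u : Euc m) : Euc n :=
  gradient (fun q' => L (q', u)) q

/-- Partial gradient `∇_uL(q,u)`. -/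
noncomputable def gradU {n m : ℕ} (L : Euc n × Euc m → ℝ) (q : Euc n) (u : Euc m) : Euc m :=
  gradient (fun u' => L (q, u')) u

open ContinuousLinearMap Set

section AdjointIdentity

variable {X U K : Type*}
  [NormedAddCommGroup X] [InnerProductSpace ℝ X] [CompleteSpace X]
  [NormedAddCommGroup U] [InnerProductSpace ℝ U] [CompleteSpace U]
  [NormedAddCommGroup K] [InnerProductSpace ℝ K] [CompleteSpace K]

theorem inner_variation_add_inner_adjoint_eq_neg_inner_grad
    (A : X →L[ℝ] X) (B : U →L[ℝ] X) (C : X →L[ℝ] K) (D : U →L[ℝ] K)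
    {p δq gq : X} {δu gu : U} {lam : K}
    (hadj : adjoint B p + adjoint D lam + gu = 0) (hconstr : C δq + D δu = 0) :
    ⟪p, A δq + B δu⟫ + ⟪-(adjoint A p) - adjoint C lam - gq, δq⟫ = -(⟪gq, δq⟫ + ⟪gu, δu⟫) := by
  have hu : ⟪adjoint B p + adjoint D lam + gu, δu⟫ = 0 := by rw [hadj, inner_zero_left]
  have hq : ⟪lam, C δq + D δu⟫ = 0 := by rw [hconstr, inner_zero_right]
  simp only [inner_add_left, inner_add_right, inner_sub_left, inner_neg_left,
    adjoint_inner_left] at hu hq ⊢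
  linarith

end AdjointIdentity

theorem intervalIntegral.integral_eq_sub_of_contDiff_of_hasDerivAt
    {E : Type*} [NormedAddCommGroup E] [NormedSpace ℝ E] [CompleteSpace E]
    {g g' : ℝ → E} {a b : ℝ} (hg : ContDiff ℝ 1 g)
    (hderiv : ∀ t ∈ uIcc a b, HasDerivAt g (g' t) t) :
    ∫ t in a..b, g' t = g b - g a := by
  have hcont : ContinuousOn g' (uIcc a b) :=
    (hg.continuous_deriv le_rfl).continuousOn.congr fun t ht => (hderiv t ht).deriv.symm
  exact intervalIntegral.integral_eq_sub_of_hasDerivAt hderiv hcont.intervalIntegrable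

theorem adjoint_sensitivity_running_cost_general {n m k : ℕ}
    (f : Euc n × Euc m → Euc n) (φ : Euc n × Euc m → Euc k) (L : Euc n × Euc m → ℝ)
    (tf : ℝ) (htf : 0 < tf)
    (q : ℝ → Euc n) (u : ℝ → Euc m) (p : ℝ → Euc n) (lam : ℝ → Euc k)
    (δq : ℝ → Euc n) (δu : ℝ → Euc m)
    (hp : ContDiff ℝ 1 p) (hδq : ContDiff ℝ 1 δq)
    (hpode : ∀ t ∈ Set.Icc (0 : ℝ) tf,
      HasDerivAt p (-(DqT f (q t) (u t) (p t)) - DqT φ (q t) (u t) (lam t)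
        - gradQ L (q t) (u t)) t)
    (hadj : ∀ t ∈ Set.Icc (0 : ℝ) tf,
      DuT f (q t) (u t) (p t) + DuT φ (q t) (u t) (lam t) + gradU L (q t) (u t) = 0)
    (hδqode : ∀ t ∈ Set.Icc (0 : ℝ) tf,
      HasDerivAt δq (Dq f (q t) (u t) (δq t) + Du f (q t) (u t) (δu t)) t)
    (hδconstr : ∀ t ∈ Set.Icc (0 : ℝ) tf,
      Dq φ (q t) (u t) (δq t) + Du φ (q t) (u t) (δu t) = 0)
    (hterm : p tf = 0) :
    ⟪p 0, δq 0⟫ =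
      ∫ t in (0 : ℝ)..tf,
        (⟪gradQ L (q t) (u t), δq t⟫ + ⟪gradU L (q t) (u t), δu t⟫) := by
  have hderiv : ∀ t ∈ uIcc 0 tf, HasDerivAt (fun t => ⟪p t, δq t⟫)
      (-(⟪gradQ L (q t) (u t), δq t⟫ + ⟪gradU L (q t) (u t), δu t⟫)) t := by
    intro t ht
    rw [uIcc_of_le htf.le] at ht
    exact ((hpode t ht).inner ℝ (hδqode t ht)).congr_deriv
      (inner_variation_add_inner_adjoint_eq_neg_inner_grad _ _ _ _ (hadj t ht) (hδconstr t ht))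
  have hftc := intervalIntegral.integral_eq_sub_of_contDiff_of_hasDerivAt (hp.inner ℝ hδq) hderiv
  rw [intervalIntegral.integral_neg, hterm, inner_zero_left] at hftc
  linarith

/-- adjoint sensitivity of a running cost. Along a solution of the
augmented adjoint DAE system with terminal condition `p(t_f) = 0` and a solution of
the variational equations, `⟨p(0), δq(0)⟩ = ∫₀^{t_f} (⟨∇_qL, δq⟩ + ⟨∇_uL, δu⟩) dt`. -/
theorem adjoint_sensitivity_running_cost {n m k : ℕ}
    (f : Euc n × Euc m → Euc n) (φ : Euc n × Euc m → Euc k) (L : Euc n × Euc m → ℝ)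
    (hf : ContDiff ℝ 1 f) (hφ : ContDiff ℝ 1 φ) (hL : ContDiff ℝ 1 L)
    (tf : ℝ) (htf : 0 < tf)
    (q : ℝ → Euc n) (u : ℝ → Euc m) (p : ℝ → Euc n) (lam : ℝ → Euc k)
    (δq : ℝ → Euc n) (δu : ℝ → Euc m)
    (hq : ContDiff ℝ 1 q) (hu : ContDiff ℝ 1 u) (hp : ContDiff ℝ 1 p)
    (hlam : ContDiff ℝ 1 lam) (hδq : ContDiff ℝ 1 δq) (hδu : ContDiff ℝ 1 δu)
    (hqode : ∀ t ∈ Set.Icc (0 : ℝ) tf, HasDerivAt q (f (q t, u t)) t)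
    (hpode : ∀ t ∈ Set.Icc (0 : ℝ) tf,
      HasDerivAt p (-(DqT f (q t) (u t) (p t)) - DqT φ (q t) (u t) (lam t)
        - gradQ L (q t) (u t)) t)
    (hconstr : ∀ t ∈ Set.Icc (0 : ℝ) tf, φ (q t, u t) = 0)
    (hadj : ∀ t ∈ Set.Icc (0 : ℝ) tf,
      DuT f (q t) (u t) (p t) + DuT φ (q t) (u t) (lam t) + gradU L (q t) (u t) = 0)
    (hδqode : ∀ t ∈ Set.Icc (0 : ℝ) tf,
      HasDerivAt δq (Dq f (q t) (u t) (δq t) + Du f (q t) (u t) (δu t)) t)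
    (hδconstr : ∀ t ∈ Set.Icc (0 : ℝ) tf,
      Dq φ (q t) (u t) (δq t) + Du φ (q t) (u t) (δu t) = 0)
    (hterm : p tf = 0) :
    ⟪p 0, δq 0⟫ =
      ∫ t in (0 : ℝ)..tf,
        (⟪gradQ L (q t) (u t), δq t⟫ + ⟪gradU L (q t) (u t), δu t⟫) :=
  adjoint_sensitivity_running_cost_general f φ L tf htf q u p lam δq δu hp hδq hpode hadj hδqode
    hδconstr hterm

end
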